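/- arXiv:2601.18109 — 3 statements merged into one kernel-verified Lean document; each statement's English description precedes it below -/
import Mathlib

section
/- Let k ≥ 2 and m be positive integers and let α : ℝ → ℝ be continuous with α(t + 2π) = α(t) + 2πm for all t and α(t) = (1/k)·α(kt) + c for all t, for some constant c ∈ ℝ. Then for every integer s ≥ 0 and every t ∈ ℝ, α(t + 2π/k^s) = α(t) + 2πm/k^s. -/
open Real

theorem stmt_1 (k m : ℕ) (hk : 2 ≤ k) (hm : 0 < m) (c : ℝ) (α : ℝ → ℝ) (hα : Continuous α)
    (hper : ∀ t : ℝ, α (t + 2 * π) = α t + 2 * π * m)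
    (hself : ∀ t : ℝ, α t = (1 / (k : ℝ)) * α (k * t) + c) :
    ∀ s : ℕ, ∀ t : ℝ, α (t + 2 * π / (k : ℝ) ^ s) = α t + 2 * π * m / (k : ℝ) ^ s := by
  have hk0 : (k : ℝ) ≠ 0 := by positivity
  intro s
  induction s with
  | zero => intro t; simpa using hper t
  | succ n ih =>
    intro t
    have h1 := hself (t + 2 * π / (k : ℝ) ^ (n + 1))
    have h2 : (k : ℝ) * (t + 2 * π / (k : ℝ) ^ (n + 1)) = k * t + 2 * π / (k : ℝ) ^ n := by
      field_simp; ring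
    rw [h2] at h1
    rw [h1, ih (k * t), hself t]
    field_simp
    ring
end

section
/- Let k ≥ 2 and m be positive integers and let α : ℝ → ℝ be continuous with α(t + 2π) = α(t) + 2πm for all t and α(t) = (1/k)·α(kt) + c for all t, for some constant c ∈ ℝ. Then α is affine: α(t) = m·t + c·k/(k − 1) for all t ∈ ℝ. -/
open Real

theorem stmt_2 (k m : ℕ) (hk : 2 ≤ k) (hm : 0 < m) (c : ℝ) (α : ℝ → ℝ) (hα : Continuous α)
    (hper : ∀ t : ℝ, α (t + 2 * π) = α t + 2 * π * m)
    (hself : ∀ t : ℝ, α t = (1 / (k : ℝ)) * α (k * t) + c) :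
    ∀ t : ℝ, α t = m * t + c * k / ((k : ℝ) - 1) := by
  have hk1 : (1 : ℝ) < (k : ℝ) := by exact_mod_cast lt_of_lt_of_le one_lt_two hk
  have hk0 : (0 : ℝ) < (k : ℝ) := by linarith
  have hkne : (k : ℝ) - 1 ≠ 0 := by linarith
  set β : ℝ → ℝ := fun t => α t - m * t - c * k / ((k : ℝ) - 1) with hβdef
  have hβcont : Continuous β := by
    apply Continuous.sub
    apply Continuous.sub hα
    · exact (continuous_const.mul continuous_id)
    · exact continuous_const
  have hβper : Function.Periodic β (2 * π) := by
    intro t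
    simp only [hβdef]
    rw [hper t]; ring
  have hαself : ∀ t : ℝ, α (k * t) = k * α t - k * c := by
    intro t
    have h := hself t
    field_simp at h
    linarith
  have hβself : ∀ t : ℝ, β (k * t) = k * β t := by
    intro t
    simp only [hβdef]
    rw [hαself t]
    field_simp
    ring
  have hpow : ∀ (s : ℕ) (t : ℝ), β ((k : ℝ) ^ s * t) = (k : ℝ) ^ s * β t := by
    intro s
    induction s with
    | zero => intro t; simp
    | succ n ih =>
      intro t
      have : (k : ℝ) ^ (n + 1) * t = (k : ℝ) * ((k : ℝ) ^ n * t) := by ring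
      rw [this, hβself, ih]; ring
  obtain ⟨M, hM⟩ : ∃ M : ℝ, ∀ t : ℝ, |β t| ≤ M := by
    obtain ⟨C, hC⟩ := (isCompact_Icc (a := (0:ℝ)) (b := 2 * π)).exists_bound_of_continuousOn
      hβcont.continuousOn
    refine ⟨C, fun t => ?_⟩
    obtain ⟨y, hy, hyt⟩ := hβper.exists_mem_Ico₀ two_pi_pos t
    rw [hyt]
    exact hC y (Set.mem_Icc_of_Ico hy)
  have hβzero : ∀ t : ℝ, β t = 0 := by
    intro t
    have hbound : ∀ s : ℕ, |β t| ≤ M * (1 / (k : ℝ)) ^ s := by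
      intro s
      have h1 : (k : ℝ) ^ s * |β t| = |β ((k : ℝ) ^ s * t)| := by
        rw [hpow, abs_mul, abs_of_pos (pow_pos hk0 s)]
      have h2 : (k : ℝ) ^ s * |β t| ≤ M := h1 ▸ hM _
      have h3 : (0 : ℝ) < (k : ℝ) ^ s := pow_pos hk0 s
      rw [one_div, inv_pow, ← div_eq_mul_inv, le_div_iff₀ h3]
      nlinarith [h2]
    have htend : Filter.Tendsto (fun s : ℕ => M * (1 / (k : ℝ)) ^ s) Filter.atTop (nhds 0) := by
      have : Filter.Tendsto (fun s : ℕ => (1 / (k : ℝ)) ^ s) Filter.atTop (nhds 0) := by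
        apply tendsto_pow_atTop_nhds_zero_of_lt_one
        · positivity
        · rw [div_lt_one hk0]; exact hk1
      simpa using this.const_mul M
    have : |β t| ≤ 0 := ge_of_tendsto' htend hbound
    have := abs_nonneg (β t)
    have : |β t| = 0 := le_antisymm ‹|β t| ≤ 0› this
    exact abs_eq_zero.mp this
  intro t
  have := hβzero t
  simp only [hβdef] at this
  linarith
end

section
/- Let f(z) = z² − 1/(16z²) and suppose a, b ∈ ℂ with a ≠ 0 satisfy f(f(a·z + b)) = f(f(z)) for all z in the common domain of definition. Then a⁴ = 1 and b = 0. -/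
/-!
Write `g = f ∘ f`. Since `f z = z² + O(z⁻²)`, one gets `g z - z⁴ → -1/8` as `z → ∞`, and the
identity `g (a z + b) = g z` holds for all large `z`. Subtracting, `(a z + b)⁴ - z⁴ → 0`. Dividing
by `z⁴` gives `a⁴ = 1`; then `(a z + b)⁴ - z⁴ = 4 a³ b z³ + O(z²)`, and dividing by `z³` gives
`b = 0`.
-/

open Filter Topology Bornology

theorem apply_zero_eq_zero_of_tendsto_pow_mul_comp_inv {𝕜 : Type*} [NontriviallyNormedField 𝕜]
    {φ : 𝕜 → 𝕜} (hφ : ContinuousAt φ 0) (n : ℕ)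
    (h : Tendsto (fun z ↦ z ^ n * φ z⁻¹) (cobounded 𝕜) (𝓝 0)) : φ 0 = 0 := by
  have hlim : Tendsto (fun z ↦ φ z⁻¹) (cobounded 𝕜) (𝓝 (φ 0)) :=
    hφ.tendsto.comp tendsto_inv₀_cobounded
  have hzero : Tendsto (fun z ↦ z⁻¹ ^ n * (z ^ n * φ z⁻¹)) (cobounded 𝕜) (𝓝 0) := by
    simpa using (tendsto_inv₀_cobounded.pow n).mul h
  refine tendsto_nhds_unique hlim (hzero.congr' ?_)
  filter_upwards [eventually_ne_cobounded 0] with z hz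
  rw [← mul_assoc, ← mul_pow, inv_mul_cancel₀ hz, one_pow, one_mul]

theorem tendsto_mul_add_const_cobounded {𝕜 : Type*} [NormedField 𝕜] {a : 𝕜} (ha : a ≠ 0)
    (b : 𝕜) : Tendsto (fun z ↦ a * z + b) (cobounded 𝕜) (cobounded 𝕜) :=
  (tendsto_add_const_cobounded b).comp (tendsto_mul_left_cobounded ha)

theorem pow_four_eq_one_and_eq_zero_of_comp_affine_eq {𝕜 : Type*} [NontriviallyNormedField 𝕜]
    [CharZero 𝕜] {g : 𝕜 → 𝕜} {L : 𝕜} (hg : Tendsto (fun z ↦ g z - z ^ 4) (cobounded 𝕜) (𝓝 L))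
    {a b : 𝕜} (ha : a ≠ 0) (h : ∀ᶠ z in cobounded 𝕜, g (a * z + b) = g z) :
    a ^ 4 = 1 ∧ b = 0 := by
  have hdiff : Tendsto (fun z ↦ (a * z + b) ^ 4 - z ^ 4) (cobounded 𝕜) (𝓝 0) := by
    refine (sub_self L ▸ hg.sub (hg.comp (tendsto_mul_add_const_cobounded ha b))).congr' ?_
    filter_upwards [h] with z hz
    simp only [Function.comp_apply, hz]
    ring
  have ha4 : a ^ 4 = 1 := by
    have := apply_zero_eq_zero_of_tendsto_pow_mul_comp_inv (φ := fun t ↦ (a + b * t) ^ 4 - 1)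
      (by fun_prop) 4 <| hdiff.congr' <| by
        filter_upwards [eventually_ne_cobounded 0] with z hz
        field_simp
    simpa [sub_eq_zero] using this
  refine ⟨ha4, ?_⟩
  have := apply_zero_eq_zero_of_tendsto_pow_mul_comp_inv
    (φ := fun t ↦ 4 * a ^ 3 * b + 6 * a ^ 2 * b ^ 2 * t + 4 * a * b ^ 3 * t ^ 2 + b ^ 4 * t ^ 3)
    (by fun_prop) 3 <| hdiff.congr' <| by
      filter_upwards [eventually_ne_cobounded 0] with z hz
      field_simp
      linear_combination z ^ 4 * ha4
  simpa [ha] using this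

theorem sixteen_mul_pow_four_ne_one_of_one_le_norm {z : ℂ} (hz : 1 ≤ ‖z‖) : 16 * z ^ 4 ≠ 1 := by
  intro h
  have h' : 16 * ‖z‖ ^ 4 = 1 := by simpa using congrArg norm h
  nlinarith [pow_le_pow_left₀ zero_le_one hz 4]

section

variable {f : ℂ → ℂ} (hf : ∀ z, f z = z ^ 2 - 1 / (16 * z ^ 2))
include hf

theorem sq_sub_inv_ne_zero_of_one_le_norm {z : ℂ} (hz : 1 ≤ ‖z‖) : f z ≠ 0 := by
  have hz0 : z ≠ 0 := norm_pos_iff.mp (by linarith)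
  intro h
  rw [hf] at h
  field_simp at h
  exact sixteen_mul_pow_four_ne_one_of_one_le_norm hz (by linear_combination h)

theorem sq_sub_inv_comp_self_sub_pow_four {z : ℂ} (hz : 1 ≤ ‖z‖) :
    f (f z) - z ^ 4 = -1 / 8 + z⁻¹ ^ 4 / 256 - 16 * z⁻¹ ^ 4 / (16 - z⁻¹ ^ 4) ^ 2 := by
  have hz0 : z ≠ 0 := norm_pos_iff.mp (by linarith)
  have h16 : 16 * z ^ 4 - 1 ≠ 0 := sub_ne_zero.mpr (sixteen_mul_pow_four_ne_one_of_one_le_norm hz)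
  have hfz : f z = (16 * z ^ 4 - 1) / (16 * z ^ 2) := by rw [hf]; field_simp
  have hinv : 16 - z⁻¹ ^ 4 = (16 * z ^ 4 - 1) / z ^ 4 := by field_simp
  rw [hf (f z), hfz, hinv]
  field_simp
  ring

theorem tendsto_sq_sub_inv_comp_self_sub_pow_four :
    Tendsto (fun z ↦ f (f z) - z ^ 4) (cobounded ℂ) (𝓝 (-1 / 8)) := by
  set φ : ℂ → ℂ := fun t ↦ -1 / 8 + t ^ 4 / 256 - 16 * t ^ 4 / (16 - t ^ 4) ^ 2
  have hφ : ContinuousAt φ 0 :=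
    ContinuousAt.sub (by fun_prop) (ContinuousAt.div (by fun_prop) (by fun_prop) (by norm_num))
  have hφ0 : φ 0 = -1 / 8 := by norm_num [φ]
  rw [← hφ0]
  refine (hφ.tendsto.comp tendsto_inv₀_cobounded).congr' ?_
  filter_upwards [eventually_cobounded_le_norm 1] with z hz
  exact (sq_sub_inv_comp_self_sub_pow_four hf hz).symm

end

theorem stmt_6 (f : ℂ → ℂ) (hf : ∀ z : ℂ, f z = z ^ 2 - 1 / (16 * z ^ 2))
    (a b : ℂ) (ha : a ≠ 0)
    (heq : ∀ z : ℂ, z ≠ 0 → a * z + b ≠ 0 → f z ≠ 0 → f (a * z + b) ≠ 0 →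
      f (f (a * z + b)) = f (f z)) :
    a ^ 4 = 1 ∧ b = 0 := by
  refine pow_four_eq_one_and_eq_zero_of_comp_affine_eq
    (tendsto_sq_sub_inv_comp_self_sub_pow_four hf) ha ?_
  filter_upwards [eventually_cobounded_le_norm 1,
    (tendsto_mul_add_const_cobounded ha b).eventually (eventually_cobounded_le_norm 1)] with z hz hw
  exact heq z (norm_pos_iff.mp (by linarith)) (norm_pos_iff.mp (by linarith))
    (sq_sub_inv_ne_zero_of_one_le_norm hf hz) (sq_sub_inv_ne_zero_of_one_le_norm hf hw)
end
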